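/- arXiv:1308.0733 — 2 statements merged into one kernel-verified Lean document; each statement's English description precedes it below -/
import Mathlib

section
/- The number of non-crossing partitions of {1,…,n} equals the n-th Catalan number, and the Kreweras complement K: NC(n) → NC(n) is an order-reversing bijection of the lattice of non-crossing partitions. -/
open Finset

/-- A family of blocks in `Fin m` is non-crossing: there are no `a < b < c < d` with
`a, c` in one block and `b, d` in a different block of the family. -/
def IsNCFamily {m : ℕ} (P : Finset (Finset (Fin m))) : Prop :=
  ¬ ∃ (a b c d : Fin m) (B₁ B₂ : Finset (Fin m)),
      a < b ∧ b < c ∧ c < d ∧ B₁ ∈ P ∧ B₂ ∈ P ∧ B₁ ≠ B₂ ∧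
      a ∈ B₁ ∧ c ∈ B₁ ∧ b ∈ B₂ ∧ d ∈ B₂

/-- A partition of `{1,…,n}` is non-crossing. -/
def IsNoncrossing {n : ℕ} (π : Finpartition (univ : Finset (Fin n))) : Prop :=
  IsNCFamily π.parts

/-- The lattice `NC(n)` of non-crossing partitions of `{1,…,n}`. -/
abbrev NCPart (n : ℕ) : Type :=
  {π : Finpartition (univ : Finset (Fin n)) // IsNoncrossing π}

/-- `i ↦ 2i`: the unprimed (even) positions in the interleaved set `1, 1̄, …, n, n̄`. -/
def evenEmb {n : ℕ} (i : Fin n) : Fin (2 * n) := ⟨2 * i, by omega⟩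

/-- `i ↦ 2i+1`: the primed (odd) positions in the interleaved set. -/
def oddEmb {n : ℕ} (i : Fin n) : Fin (2 * n) := ⟨2 * i + 1, by omega⟩

/-- `σ` (on the primed copies) is Kreweras-compatible with `π`: the interleaved union
`π ∪ σ̄` is a non-crossing family on `1, 1̄, 2, 2̄, …, n, n̄`. -/
def KrewCompat {n : ℕ} (π σ : Finpartition (univ : Finset (Fin n))) : Prop :=
  IsNCFamily ((π.parts.image fun B => B.image evenEmb) ∪
    (σ.parts.image fun B => B.image oddEmb))

open Classical in
/-- The Kreweras complement `K(π)`: the greatest non-crossing partition whose interleaved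
union with `π` is non-crossing. -/
noncomputable def kreweras {n : ℕ} (π : NCPart n) : NCPart n :=
  if h : ∃ σ : NCPart n, IsGreatest {σ : NCPart n | KrewCompat π.1 σ.1} σ then h.choose
  else π

/-! A partition is recorded by its same-block setoid `r`. The Kreweras complement of `r`
relates `x` and `y` when the interval `(x, y]` is a union of `r`-classes. An interleaved crossing
between `π` and `σ` that uses blocks of both is exactly a `σ`-pair `j < l` whose interval
`(j, l]` is not a union of `π`-classes, so this setoid is the greatest `σ` compatible with `π`.
Conversely, for non-crossing `π`, `i < k` lie in one block iff `[i, k)` is a union of classes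
of `K(π)`; hence `K` reverses and reflects the order, so it is injective and, `NC(n)` being
finite, bijective.

For the count, cut a non-crossing partition of `{0, …, n}` at the largest element `j` of the
block of `0`: `{0, …, j}` is a union of blocks, and the partition is determined by its
restrictions to `{0, …, j - 1}` (with `j` rejoining the block of `0`) and to `{j + 1, …, n}`,
which are arbitrary non-crossing partitions. This is the Catalan recurrence
`C (n + 1) = ∑ j, C j * C (n - j)`. -/

open scoped Interval

namespace Setoid

variable {α : Type*}

def IsSaturated (r : Setoid α) (s : Set α) : Prop :=
  ∀ ⦃x y⦄, r x y → x ∈ s → y ∈ s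

namespace IsSaturated

variable {r s : Setoid α} {t u : Set α}

lemma mem_iff (ht : r.IsSaturated t) {x y : α} (h : r x y) : x ∈ t ↔ y ∈ t :=
  ⟨ht h, ht (r.symm h)⟩

lemma mono (ht : s.IsSaturated t) (hrs : r ≤ s) : r.IsSaturated t :=
  fun _ _ h => ht (hrs h)

lemma diff (ht : r.IsSaturated t) (hu : r.IsSaturated u) : r.IsSaturated (t \ u) := by
  intro x y h
  simp only [Set.mem_sdiff, ht.mem_iff h, hu.mem_iff h, imp_self]

lemma symmDiff (ht : r.IsSaturated t) (hu : r.IsSaturated u) :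
    r.IsSaturated (symmDiff t u) := by
  intro x y h
  simp only [Set.mem_symmDiff, ht.mem_iff h, hu.mem_iff h, imp_self]

end IsSaturated

variable [LinearOrder α]

def IsNoncrossing (r : Setoid α) : Prop :=
  ∀ ⦃a b c d⦄, a < b → b < c → c < d → r a c → r b d → r a b

namespace IsNoncrossing

variable {r : Setoid α}

lemma comap {β : Type*} [LinearOrder β] (hr : r.IsNoncrossing) {f : β → α}
    (hf : StrictMono f) : (r.comap f).IsNoncrossing :=
  fun _ _ _ _ hab hbc hcd hac hbd => hr (hf hab) (hf hbc) (hf hcd) hac hbd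

lemma rel_of_notMem_Icc (hr : r.IsNoncrossing) {a b c e : α} (hac : r a c)
    (hb : b ∈ Set.Ioo a c) (hbe : r b e) (he : e ∉ Set.Icc a c) : r a b := by
  rw [Set.mem_Icc, not_and_or, not_le, not_le] at he
  rcases he with hea | hce
  · exact r.trans (r.symm (hr hea hb.1 hb.2 (r.symm hbe) hac)) (r.symm hbe)
  · exact hr hb.1 hb.2 hce hac hbe

lemma isSaturated_Ioo (hr : r.IsNoncrossing) {a c : α} (hac : r a c)
    (hgap : ∀ x ∈ Set.Ioo a c, ¬ r a x) : r.IsSaturated (Set.Ioo a c) := by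
  intro x y hxy hx
  by_contra hy
  refine hgap x hx (hr.rel_of_notMem_Icc hac hx hxy fun hy' => ?_)
  rcases hy'.1.eq_or_lt with rfl | hay
  · exact hgap x hx (r.symm hxy)
  rcases hy'.2.eq_or_lt with rfl | hyc
  · exact hgap x hx (r.trans hac (r.symm hxy))
  · exact hy ⟨hay, hyc⟩

lemma isSaturated_Icc (hr : r.IsNoncrossing) {a c : α} (hac : r a c)
    (hmin : ∀ x, r a x → a ≤ x) (hmax : ∀ x, r a x → x ≤ c) :
    r.IsSaturated (Set.Icc a c) := by
  intro x y hxy hx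
  by_cases hax : r a x
  · exact ⟨hmin y (r.trans hax hxy), hmax y (r.trans hax hxy)⟩
  by_contra hy
  have hx' : x ∈ Set.Ioo a c :=
    ⟨hx.1.lt_of_ne (by rintro rfl; exact hax (r.refl a)),
      hx.2.lt_of_ne (by rintro rfl; exact hax hac)⟩
  exact hax (hr.rel_of_notMem_Icc hac hx' hxy hy)

end IsNoncrossing

lemma _root_.Set.uIoc_symmDiff_uIoc (a b c : α) : symmDiff (Ι a b) (Ι b c) = Ι a c := by
  ext x
  simp only [Set.mem_symmDiff, Set.mem_uIoc]
  grind

def krewerasComplement (r : Setoid α) : Setoid α where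
  r x y := r.IsSaturated (Ι x y)
  iseqv :=
    { refl := fun x => by simp [IsSaturated]
      symm := fun h => by rwa [Set.uIoc_comm]
      trans := fun h h' => by rw [← Set.uIoc_symmDiff_uIoc]; exact h.symmDiff h' }

lemma krewerasComplement_rel {r : Setoid α} {x y : α} :
    r.krewerasComplement x y ↔ r.IsSaturated (Ι x y) := Iff.rfl

lemma krewerasComplement_isNoncrossing (r : Setoid α) :
    r.krewerasComplement.IsNoncrossing := by
  intro a b c d hab hbc hcd hac hbd
  simp only [krewerasComplement_rel, Set.uIoc_of_le, hab.le, (hab.trans hbc).le,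
    (hbc.trans hcd).le] at hac hbd ⊢
  have : Set.Ioc a b = Set.Ioc a c \ Set.Ioc b d := by
    ext x
    simp only [Set.mem_Ioc, Set.mem_sdiff]
    grind
  exact this ▸ hac.diff hbd

lemma krewerasComplement_anti {r s : Setoid α} (h : r ≤ s) :
    s.krewerasComplement ≤ r.krewerasComplement :=
  fun _ _ hxy => hxy.mono h

lemma le_krewerasComplement_iff {r s : Setoid α} :
    s ≤ r.krewerasComplement ↔ ∀ ⦃j l⦄, j < l → s j l → r.IsSaturated (Set.Ioc j l) := by
  simp only [le_def, krewerasComplement_rel]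
  refine ⟨fun h j l hjl hs => Set.uIoc_of_le hjl.le ▸ h hs, fun h x y hs => ?_⟩
  rcases lt_trichotomy x y with hxy | rfl | hyx
  · exact Set.uIoc_of_le hxy.le ▸ h hxy hs
  · exact r.krewerasComplement.refl x
  · exact Set.uIoc_of_ge hyx.le ▸ h hyx (s.symm hs)

lemma isSaturated_krewerasComplement_Ico {r : Setoid α} {i k : α} (hik : i < k)
    (h : r i k) : r.krewerasComplement.IsSaturated (Set.Ico i k) := by
  intro x y hxy hx
  have := krewerasComplement_rel.1 hxy |>.mem_iff h
  simp only [Set.mem_uIoc, Set.mem_Ico] at *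
  grind

open Order in
lemma IsNoncrossing.rel_of_isSaturated_Ico [PredOrder α] [Finite α] {r : Setoid α}
    (hr : r.IsNoncrossing) {i k : α} (hik : i < k)
    (h : r.krewerasComplement.IsSaturated (Set.Ico i k)) : r i k := by
  by_contra hik'
  -- With `v` the least element of the class of `k` above `i`, `pred v ∈ [i, k)` is related
  -- in `K(r)` to a point outside `[i, k)`: to the previous element `s < i` of the class of `v`,
  -- or, if `v` is the least element of its class, to the largest element `M ≥ k` of it.
  obtain ⟨v, ⟨hkv, hiv⟩, hvmin⟩ := Set.exists_min_image {v | r k v ∧ i < v} id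
    (Set.toFinite _) ⟨k, r.refl k, hik⟩
  have hpv : pred v ∈ Set.Ico i k :=
    ⟨le_pred_of_lt hiv,
      (pred_lt_of_not_isMin hiv.not_isMin).trans_le (hvmin k ⟨r.refl k, hik⟩)⟩
  suffices ∃ y ∉ Set.Ico i k, r.IsSaturated (Ι (pred v) y) by
    obtain ⟨y, hy, hsat⟩ := this
    exact hy (h hsat hpv)
  by_cases hbelow : ∃ s, r v s ∧ s < v
  · obtain ⟨s, ⟨hvs, hsv⟩, hsmax⟩ := Set.exists_max_image {s | r v s ∧ s < v} id
      (Set.toFinite _) hbelow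
    refine ⟨s, fun hs => ?_, ?_⟩
    · rcases hs.1.eq_or_lt with rfl | his
      · exact hik' (r.symm (r.trans hkv hvs))
      · exact (hvmin s ⟨r.trans hkv hvs, his⟩).not_gt hsv
    · rw [Set.uIoc_of_ge (le_pred_of_lt hsv), Set.Ioc_pred_right_eq_Ioo]
      exact hr.isSaturated_Ioo (r.symm hvs) fun x hx hsx =>
        (hsmax x ⟨r.trans hvs hsx, hx.2⟩).not_gt hx.1
  · push Not at hbelow
    obtain ⟨M, hvM, hMmax⟩ := Set.exists_max_image {M | r v M} id (Set.toFinite _)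
      ⟨v, r.refl v⟩
    refine ⟨M, fun hM => (hMmax k (r.symm hkv)).not_gt hM.2, ?_⟩
    rw [Set.uIoc_of_le ((pred_le v).trans (hbelow M hvM)),
      Set.Ioc_pred_left_eq_Icc_of_not_isMin hiv.not_isMin]
    exact hr.isSaturated_Icc hvM hbelow hMmax

lemma IsNoncrossing.krewerasComplement_le_iff [PredOrder α] [Finite α] {r s : Setoid α}
    (hr : r.IsNoncrossing) : r.krewerasComplement ≤ s.krewerasComplement ↔ s ≤ r := by
  refine ⟨fun h => ?_, krewerasComplement_anti⟩
  have key : ∀ ⦃x y⦄, x < y → s x y → r x y := fun x y hxy hs =>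
    hr.rel_of_isSaturated_Ico hxy ((isSaturated_krewerasComplement_Ico hxy hs).mono h)
  intro x y hs
  rcases lt_trichotomy x y with hxy | rfl | hyx
  · exact key hxy hs
  · exact r.refl x
  · exact r.symm (key hyx (s.symm hs))

end Setoid

namespace Finpartition

variable {α : Type*} [Fintype α] [DecidableEq α]

def toSetoid (P : Finpartition (univ : Finset α)) : Setoid α :=
  Setoid.ker P.part

lemma toSetoid_iff {P : Finpartition (univ : Finset α)} {x y : α} :
    P.toSetoid x y ↔ ∃ B ∈ P.parts, x ∈ B ∧ y ∈ B := by
  rw [toSetoid, Setoid.ker_def, ← P.mem_part_iff_part_eq_part (mem_univ x) (mem_univ y),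
    P.mem_part_iff_exists]

lemma toSetoid_ofSetoid (s : Setoid α) [DecidableRel s] : (ofSetoid s).toSetoid = s := by
  ext x y
  rw [toSetoid, Setoid.ker_def, ← Finpartition.mem_part_iff_part_eq_part _ (mem_univ x)
    (mem_univ y), mem_part_ofSetoid_iff_rel, s.comm']

lemma toSetoid_le_toSetoid_iff {P Q : Finpartition (univ : Finset α)} :
    P.toSetoid ≤ Q.toSetoid ↔ P ≤ Q := by
  refine ⟨fun h B hB => ?_, fun h x y hxy => ?_⟩
  · obtain ⟨x, hx⟩ := P.nonempty_of_mem_parts hB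
    refine ⟨Q.part x, Q.part_mem.2 (mem_univ x), fun y hy => ?_⟩
    have hxy : Q.toSetoid y x := h (toSetoid_iff.2 ⟨B, hB, hy, hx⟩)
    exact (Q.mem_part_iff_part_eq_part (mem_univ y) (mem_univ x)).2 hxy
  · obtain ⟨B, hB, hx, hy⟩ := toSetoid_iff.1 hxy
    obtain ⟨C, hC, hBC⟩ := h hB
    exact toSetoid_iff.2 ⟨C, hC, hBC hx, hBC hy⟩

open Classical in
noncomputable def setoidOrderIso : Finpartition (univ : Finset α) ≃o Setoid α where
  toFun := toSetoid
  invFun s := ofSetoid s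
  left_inv _ := le_antisymm (toSetoid_le_toSetoid_iff.1 (toSetoid_ofSetoid _).le)
    (toSetoid_le_toSetoid_iff.1 (toSetoid_ofSetoid _).ge)
  right_inv s := toSetoid_ofSetoid s
  map_rel_iff' := toSetoid_le_toSetoid_iff

@[simp]
lemma setoidOrderIso_apply (P : Finpartition (univ : Finset α)) :
    setoidOrderIso P = P.toSetoid := rfl

end Finpartition

lemma isNoncrossing_iff_toSetoid {m : ℕ} {P : Finpartition (univ : Finset (Fin m))} :
    IsNoncrossing P ↔ P.toSetoid.IsNoncrossing := by
  simp only [IsNoncrossing, IsNCFamily, Setoid.IsNoncrossing, Finpartition.toSetoid_iff]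
  constructor
  · rintro h a b c d hab hbc hcd ⟨B₁, hB₁, ha, hc⟩ ⟨B₂, hB₂, hb, hd⟩
    by_cases hne : B₁ = B₂
    · exact ⟨B₁, hB₁, ha, hne ▸ hb⟩
    · exact absurd ⟨a, b, c, d, B₁, B₂, hab, hbc, hcd, hB₁, hB₂, hne, ha, hc, hb, hd⟩ h
  · rintro h ⟨a, b, c, d, B₁, B₂, hab, hbc, hcd, hB₁, hB₂, hne, ha, hc, hb, hd⟩
    obtain ⟨B, hB, ha', hb'⟩ := h hab hbc hcd ⟨B₁, hB₁, ha, hc⟩ ⟨B₂, hB₂, hb, hd⟩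
    exact hne ((P.eq_of_mem_parts hB₁ hB ha ha').trans (P.eq_of_mem_parts hB hB₂ hb' hb))

lemma IsNCFamily.mono {m : ℕ} {F G : Finset (Finset (Fin m))} (hFG : F ⊆ G)
    (hG : IsNCFamily G) : IsNCFamily F :=
  fun ⟨a, b, c, d, B₁, B₂, hab, hbc, hcd, hB₁, hB₂, h⟩ =>
    hG ⟨a, b, c, d, B₁, B₂, hab, hbc, hcd, hFG hB₁, hFG hB₂, h⟩

lemma isNCFamily_image_iff {m k : ℕ} {F : Finset (Finset (Fin m))} {f : Fin m → Fin k}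
    (hf : StrictMono f) : IsNCFamily (F.image (image f)) ↔ IsNCFamily F := by
  constructor
  · rintro hF ⟨a, b, c, d, B₁, B₂, hab, hbc, hcd, hB₁, hB₂, hne, ha, hc, hb, hd⟩
    exact hF ⟨f a, f b, f c, f d, B₁.image f, B₂.image f, hf hab, hf hbc, hf hcd,
      mem_image_of_mem _ hB₁, mem_image_of_mem _ hB₂,
      fun h => hne (image_injective hf.injective h), mem_image_of_mem _ ha,
      mem_image_of_mem _ hc, mem_image_of_mem _ hb, mem_image_of_mem _ hd⟩
  · rintro hF ⟨a, b, c, d, B₁, B₂, hab, hbc, hcd, hB₁, hB₂, hne, ha, hc, hb, hd⟩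
    obtain ⟨A₁, hA₁, rfl⟩ := mem_image.1 hB₁
    obtain ⟨A₂, hA₂, rfl⟩ := mem_image.1 hB₂
    obtain ⟨a', ha', rfl⟩ := mem_image.1 ha
    obtain ⟨b', hb', rfl⟩ := mem_image.1 hb
    obtain ⟨c', hc', rfl⟩ := mem_image.1 hc
    obtain ⟨d', hd', rfl⟩ := mem_image.1 hd
    exact hF ⟨a', b', c', d', A₁, A₂, hf.lt_iff_lt.1 hab, hf.lt_iff_lt.1 hbc,
      hf.lt_iff_lt.1 hcd, hA₁, hA₂, fun h => hne (h ▸ rfl), ha', hc', hb', hd'⟩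

section Interleaving

variable {n : ℕ}

lemma evenEmb_strictMono : StrictMono (evenEmb (n := n)) := fun i j h => by
  simp only [evenEmb, Fin.lt_def] at h ⊢; omega

lemma oddEmb_strictMono : StrictMono (oddEmb (n := n)) := fun i j h => by
  simp only [oddEmb, Fin.lt_def] at h ⊢; omega

@[simp]
lemma evenEmb_lt_oddEmb {i j : Fin n} : evenEmb i < oddEmb j ↔ i ≤ j := by
  simp only [evenEmb, oddEmb, Fin.lt_def, Fin.le_def]; omega

@[simp]
lemma oddEmb_lt_evenEmb {i j : Fin n} : oddEmb i < evenEmb j ↔ i < j := by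
  simp only [evenEmb, oddEmb, Fin.lt_def]; omega

lemma image_evenEmb_ne_image_oddEmb {A B : Finset (Fin n)} {x : Fin n} (hx : x ∈ A) :
    A.image evenEmb ≠ B.image oddEmb := fun h => by
  obtain ⟨y, -, hy⟩ := mem_image.1 (h ▸ mem_image_of_mem evenEmb hx)
  simp only [evenEmb, oddEmb, Fin.ext_iff] at hy
  omega

lemma krewCompat_iff {P Q : Finpartition (univ : Finset (Fin n))} :
    KrewCompat P Q ↔
      IsNoncrossing P ∧ IsNoncrossing Q ∧ Q.toSetoid ≤ P.toSetoid.krewerasComplement := by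
  rw [Setoid.le_krewerasComplement_iff]
  constructor
  · intro h
    refine ⟨(isNCFamily_image_iff evenEmb_strictMono).1 (h.mono subset_union_left),
      (isNCFamily_image_iff oddEmb_strictMono).1 (h.mono subset_union_right),
      fun j l hjl hQ x y hP hx => ?_⟩
    obtain ⟨B, hB, hj, hl⟩ := Finpartition.toSetoid_iff.1 hQ
    obtain ⟨A, hA, hx', hy'⟩ := Finpartition.toSetoid_iff.1 hP
    have hA' := mem_union_left (Q.parts.image (image oddEmb))
      (mem_image_of_mem (image evenEmb) hA)
    have hB' := mem_union_right (P.parts.image (image evenEmb))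
      (mem_image_of_mem (image oddEmb) hB)
    have hne := image_evenEmb_ne_image_oddEmb (B := B) hx'
    by_contra hy
    by_cases hyj : y ≤ j
    · exact h ⟨evenEmb y, oddEmb j, evenEmb x, oddEmb l, _, _, evenEmb_lt_oddEmb.2 hyj,
        oddEmb_lt_evenEmb.2 hx.1, evenEmb_lt_oddEmb.2 hx.2, hA', hB', hne,
        mem_image_of_mem _ hy', mem_image_of_mem _ hx', mem_image_of_mem _ hj,
        mem_image_of_mem _ hl⟩
    · have hly : l < y := lt_of_not_ge fun hyl => hy ⟨lt_of_not_ge hyj, hyl⟩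
      exact h ⟨oddEmb j, evenEmb x, oddEmb l, evenEmb y, _, _, oddEmb_lt_evenEmb.2 hx.1,
        evenEmb_lt_oddEmb.2 hx.2, oddEmb_lt_evenEmb.2 hly, hB', hA', hne.symm,
        mem_image_of_mem _ hj, mem_image_of_mem _ hl, mem_image_of_mem _ hx',
        mem_image_of_mem _ hy'⟩
  · rintro ⟨hP, hQ, hsat⟩ ⟨a, b, c, d, B₁, B₂, hab, hbc, hcd, hB₁, hB₂, hne, ha, hc, hb, hd⟩
    rw [mem_union] at hB₁ hB₂
    rcases hB₁ with hB₁ | hB₁ <;> rcases hB₂ with hB₂ | hB₂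
    · exact (isNCFamily_image_iff evenEmb_strictMono).2 hP
        ⟨a, b, c, d, B₁, B₂, hab, hbc, hcd, hB₁, hB₂, hne, ha, hc, hb, hd⟩
    · obtain ⟨A, hA, rfl⟩ := mem_image.1 hB₁
      obtain ⟨B, hB, rfl⟩ := mem_image.1 hB₂
      obtain ⟨i, hi, rfl⟩ := mem_image.1 ha
      obtain ⟨j, hj, rfl⟩ := mem_image.1 hb
      obtain ⟨k, hk, rfl⟩ := mem_image.1 hc
      obtain ⟨l, hl, rfl⟩ := mem_image.1 hd
      simp only [evenEmb_lt_oddEmb, oddEmb_lt_evenEmb] at hab hbc hcd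
      have := hsat (hbc.trans_le hcd) (Finpartition.toSetoid_iff.2 ⟨B, hB, hj, hl⟩)
        (Finpartition.toSetoid_iff.2 ⟨A, hA, hk, hi⟩) ⟨hbc, hcd⟩
      exact this.1.not_ge hab
    · obtain ⟨B, hB, rfl⟩ := mem_image.1 hB₁
      obtain ⟨A, hA, rfl⟩ := mem_image.1 hB₂
      obtain ⟨i, hi, rfl⟩ := mem_image.1 ha
      obtain ⟨j, hj, rfl⟩ := mem_image.1 hb
      obtain ⟨k, hk, rfl⟩ := mem_image.1 hc
      obtain ⟨l, hl, rfl⟩ := mem_image.1 hd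
      simp only [evenEmb_lt_oddEmb, oddEmb_lt_evenEmb] at hab hbc hcd
      have := hsat (hab.trans_le hbc) (Finpartition.toSetoid_iff.2 ⟨B, hB, hi, hk⟩)
        (Finpartition.toSetoid_iff.2 ⟨A, hA, hj, hl⟩) ⟨hab, hbc⟩
      exact this.2.not_gt hcd
    · exact (isNCFamily_image_iff oddEmb_strictMono).2 hQ
        ⟨a, b, c, d, B₁, B₂, hab, hbc, hcd, hB₁, hB₂, hne, ha, hc, hb, hd⟩

end Interleaving

namespace NCPart

variable {n : ℕ}

lemma le_iff_toSetoid_le {π σ : NCPart n} : π ≤ σ ↔ π.1.toSetoid ≤ σ.1.toSetoid :=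
  Finpartition.toSetoid_le_toSetoid_iff.symm

noncomputable def krewerasComplement (π : NCPart n) : NCPart n :=
  ⟨Finpartition.setoidOrderIso.symm π.1.toSetoid.krewerasComplement, by
    rw [isNoncrossing_iff_toSetoid, ← Finpartition.setoidOrderIso_apply,
      OrderIso.apply_symm_apply]
    exact Setoid.krewerasComplement_isNoncrossing _⟩

lemma toSetoid_krewerasComplement (π : NCPart n) :
    (krewerasComplement π).1.toSetoid = π.1.toSetoid.krewerasComplement :=
  Finpartition.setoidOrderIso.apply_symm_apply _

lemma setOf_krewCompat_eq_Iic (π : NCPart n) :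
    {σ : NCPart n | KrewCompat π.1 σ.1} = Set.Iic (krewerasComplement π) := by
  ext σ
  simp only [Set.mem_ofPred_eq, Set.mem_Iic, krewCompat_iff, π.2, σ.2, true_and,
    le_iff_toSetoid_le, toSetoid_krewerasComplement]

lemma kreweras_eq_krewerasComplement (π : NCPart n) : kreweras π = krewerasComplement π := by
  have h : IsGreatest {σ : NCPart n | KrewCompat π.1 σ.1} (krewerasComplement π) :=
    setOf_krewCompat_eq_Iic π ▸ isGreatest_Iic
  rw [kreweras, dif_pos ⟨_, h⟩]
  exact IsGreatest.unique (Exists.choose_spec (⟨_, h⟩ : ∃ σ, IsGreatest _ σ)) h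

lemma krewerasComplement_le_iff {π σ : NCPart n} :
    krewerasComplement π ≤ krewerasComplement σ ↔ σ ≤ π := by
  simp only [le_iff_toSetoid_le, toSetoid_krewerasComplement]
  exact (isNoncrossing_iff_toSetoid.1 π.2).krewerasComplement_le_iff

end NCPart

abbrev NCSetoid (m : ℕ) : Type :=
  {r : Setoid (Fin m) // r.IsNoncrossing}

noncomputable def NCPart.equivNCSetoid (m : ℕ) : NCPart m ≃ NCSetoid m :=
  Finpartition.setoidOrderIso.toEquiv.subtypeEquiv fun _ => isNoncrossing_iff_toSetoid

instance (m : ℕ) : Finite (NCSetoid m) :=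
  Finite.of_equiv _ (NCPart.equivNCSetoid m)

lemma NCSetoid.card_zero : Nat.card (NCSetoid 0) = 1 := by
  have : Subsingleton (NCSetoid 0) := ⟨fun r s => Subtype.ext (Setoid.ext fun a => a.elim0)⟩
  have : Nonempty (NCSetoid 0) := ⟨⟨⊤, fun a => a.elim0⟩⟩
  exact Nat.card_eq_one_iff_unique.2 ⟨inferInstance, inferInstance⟩

section Cut

variable {n : ℕ}

def leftEmb (j : Fin (n + 1)) (a : Fin j) : Fin (n + 1) := ⟨a, by omega⟩

def rightEmb (j : Fin (n + 1)) (a : Fin (n - j)) : Fin (n + 1) := ⟨j + 1 + a, by omega⟩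

lemma leftEmb_strictMono (j : Fin (n + 1)) : StrictMono (leftEmb j) := fun _ _ h => h

lemma rightEmb_strictMono (j : Fin (n + 1)) : StrictMono (rightEmb j) := fun _ _ h => by
  simp only [rightEmb, Fin.lt_def] at h ⊢; omega

lemma exists_leftEmb_eq {j x : Fin (n + 1)} (h : x < j) : ∃ a, leftEmb j a = x :=
  ⟨⟨x, h⟩, rfl⟩

lemma exists_rightEmb_eq {j x : Fin (n + 1)} (h : j < x) : ∃ a, rightEmb j a = x :=
  ⟨⟨x - j - 1, by omega⟩, by ext; simp only [rightEmb]; omega⟩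

namespace Setoid

def IsSplitAt (r : Setoid (Fin (n + 1))) (j : Fin (n + 1)) : Prop :=
  r 0 j ∧ ∀ ⦃x y⦄, x ≤ j → j < y → ¬ r x y

lemma IsSplitAt.rel_iff_rel_zero {r : Setoid (Fin (n + 1))} {j : Fin (n + 1)} (h : r.IsSplitAt j)
    {x : Fin (n + 1)} : r x j ↔ r x 0 :=
  ⟨fun hx => r.trans hx (r.symm h.1), fun hx => r.trans hx h.1⟩

lemma IsSplitAt.ext {r s : Setoid (Fin (n + 1))} {j : Fin (n + 1)} (hr : r.IsSplitAt j)
    (hs : s.IsSplitAt j) (hL : r.comap (leftEmb j) = s.comap (leftEmb j))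
    (hR : r.comap (rightEmb j) = s.comap (rightEmb j)) : r = s := by
  have left : ∀ ⦃x y⦄, x < j → y < j → (r x y ↔ s x y) := fun x y hx hy => by
    obtain ⟨a, rfl⟩ := exists_leftEmb_eq hx
    obtain ⟨b, rfl⟩ := exists_leftEmb_eq hy
    exact Setoid.ext_iff.1 hL a b
  have key : ∀ ⦃x y⦄, x ≤ y → (r x y ↔ s x y) := fun x y hxy => by
    rcases lt_or_ge j x with hjx | hxj
    · obtain ⟨a, rfl⟩ := exists_rightEmb_eq hjx
      obtain ⟨b, rfl⟩ := exists_rightEmb_eq (hjx.trans_le hxy)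
      exact Setoid.ext_iff.1 hR a b
    rcases lt_or_ge j y with hjy | hyj
    · exact iff_of_false (hr.2 hxj hjy) (hs.2 hxj hjy)
    rcases hyj.lt_or_eq with hyj | rfl
    · exact left (hxy.trans_lt hyj) hyj
    rcases hxj.lt_or_eq with hxj | rfl
    · rw [hr.rel_iff_rel_zero, hs.rel_iff_rel_zero]
      exact left hxj ((Fin.zero_le x).trans_lt hxj)
    · exact iff_of_true (r.refl _) (s.refl _)
  exact Setoid.ext fun x y => (le_total x y).elim (key ·) fun h => by
    rw [r.comm', s.comm']; exact key h

open Classical in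
noncomputable def zeroClassMax (r : Setoid (Fin (n + 1))) : Fin (n + 1) :=
  (univ.filter (r 0)).max' ⟨0, mem_filter.2 ⟨mem_univ 0, r.refl 0⟩⟩

lemma IsSplitAt.zeroClassMax_eq {r : Setoid (Fin (n + 1))} {j : Fin (n + 1)}
    (h : r.IsSplitAt j) : r.zeroClassMax = j := by
  classical
  exact le_antisymm (max'_le _ _ _ fun y hy => not_lt.1 fun hjy =>
      h.2 (Fin.zero_le j) hjy (mem_filter.1 hy).2)
    (le_max' _ _ (mem_filter.2 ⟨mem_univ _, h.1⟩))

lemma IsNoncrossing.isSplitAt_zeroClassMax {r : Setoid (Fin (n + 1))} (hr : r.IsNoncrossing) :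
    r.IsSplitAt r.zeroClassMax := by
  classical
  have h0 : r 0 r.zeroClassMax := (mem_filter.1 (max'_mem _ _)).2
  have hmax : ∀ y, r 0 y → y ≤ r.zeroClassMax := fun y hy =>
    le_max' _ _ (mem_filter.2 ⟨mem_univ _, hy⟩)
  refine ⟨h0, fun x y hx hy hxy => hy.not_ge ?_⟩
  exact (hr.isSaturated_Icc h0 (fun y _ => Fin.zero_le y) hmax hxy ⟨Fin.zero_le x, hx⟩).2

variable {j : Fin (n + 1)} {L : Setoid (Fin j)} {R : Setoid (Fin (n - j))}

/-- Its kernel `glue j L R` is `L` below `j` and `R` above `j`, and joins `j` to the class of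
`0` (leaving `j` alone when `j = 0`). -/
def glueCode (j : Fin (n + 1)) (L : Setoid (Fin j)) (R : Setoid (Fin (n - j)))
    (x : Fin (n + 1)) : Option (Quotient L) ⊕ Quotient R :=
  if h : x < j then .inl (some ⟦⟨x, h⟩⟧)
  else if h' : j < x then .inr ⟦⟨x - j - 1, by omega⟩⟧
  else .inl (if h0 : 0 < (j : ℕ) then some ⟦⟨0, h0⟩⟧ else none)

def glue (j : Fin (n + 1)) (L : Setoid (Fin j)) (R : Setoid (Fin (n - j))) :
    Setoid (Fin (n + 1)) :=
  ker (glueCode j L R)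

lemma glueCode_leftEmb (a : Fin j) : glueCode j L R (leftEmb j a) = .inl (some ⟦a⟧) := by
  rw [glueCode, dif_pos (show leftEmb j a < j from a.isLt)]
  rfl

lemma glueCode_rightEmb (a : Fin (n - j)) : glueCode j L R (rightEmb j a) = .inr ⟦a⟧ := by
  have hj : j < rightEmb j a := by simp only [rightEmb, Fin.lt_def]; omega
  rw [glueCode, dif_neg hj.not_gt, dif_pos hj]
  congr 2
  ext
  simp only [rightEmb]
  omega

lemma glue_isSplitAt : (glue j L R).IsSplitAt j := by
  refine ⟨?_, fun x y hx hy => ?_⟩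
  · rcases (Fin.zero_le j).eq_or_lt with h | h
    · subst h
      exact (glue _ L R).refl _
    · show glueCode j L R 0 = glueCode j L R j
      have h' : 0 < (j : ℕ) := h
      simp [glueCode, h, h']
  · show glueCode j L R x ≠ glueCode j L R y
    simp only [glueCode, dif_neg hy.not_gt, dif_pos hy, dif_neg hx.not_gt]
    split_ifs <;> simp

lemma comap_leftEmb_glue : (glue j L R).comap (leftEmb j) = L :=
  Setoid.ext fun a b => by
    rw [comap_rel, glue, ker_def, glueCode_leftEmb, glueCode_leftEmb, Sum.inl.injEq,
      Option.some_inj, Quotient.eq]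

lemma comap_rightEmb_glue : (glue j L R).comap (rightEmb j) = R :=
  Setoid.ext fun a b => by
    rw [comap_rel, glue, ker_def, glueCode_rightEmb, glueCode_rightEmb, Sum.inr.injEq,
      Quotient.eq]

lemma glue_leftEmb_self (a : Fin j) : glue j L R (leftEmb j a) j ↔ L a ⟨0, a.pos⟩ := by
  rw [glue_isSplitAt.rel_iff_rel_zero]
  exact Setoid.ext_iff.1 comap_leftEmb_glue a ⟨0, a.pos⟩

lemma glue_isNoncrossing (hL : L.IsNoncrossing) (hR : R.IsNoncrossing) :
    (glue j L R).IsNoncrossing := by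
  have hleft (a b : Fin j) : glue j L R (leftEmb j a) (leftEmb j b) ↔ L a b :=
    Setoid.ext_iff.1 comap_leftEmb_glue a b
  have hright (a b : Fin (n - j)) : glue j L R (rightEmb j a) (rightEmb j b) ↔ R a b :=
    Setoid.ext_iff.1 comap_rightEmb_glue a b
  intro a b c d hab hbc hcd hac hbd
  rcases lt_or_ge j a with hja | haj
  · obtain ⟨a, rfl⟩ := exists_rightEmb_eq hja
    obtain ⟨b, rfl⟩ := exists_rightEmb_eq (hja.trans hab)
    obtain ⟨c, rfl⟩ := exists_rightEmb_eq (hja.trans (hab.trans hbc))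
    obtain ⟨d, rfl⟩ := exists_rightEmb_eq (hja.trans (hab.trans (hbc.trans hcd)))
    simp only [(rightEmb_strictMono j).lt_iff_lt, hright] at *
    exact hR hab hbc hcd hac hbd
  have hcj : c ≤ j := not_lt.1 fun hjc => glue_isSplitAt.2 haj hjc hac
  have hdj : d ≤ j := not_lt.1 fun hjd => glue_isSplitAt.2 (hbc.trans_le hcj).le hjd hbd
  obtain ⟨c, rfl⟩ := exists_leftEmb_eq (hcd.trans_le hdj)
  obtain ⟨b, rfl⟩ := exists_leftEmb_eq (hbc.trans (hcd.trans_le hdj))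
  obtain ⟨a, rfl⟩ := exists_leftEmb_eq (hab.trans (hbc.trans (hcd.trans_le hdj)))
  simp only [(leftEmb_strictMono j).lt_iff_lt, hleft] at hab hbc hac ⊢
  rcases hdj.lt_or_eq with hdj | rfl
  · obtain ⟨d, rfl⟩ := exists_leftEmb_eq hdj
    simp only [(leftEmb_strictMono j).lt_iff_lt, hleft] at hcd hbd
    exact hL hab hbc hcd hac hbd
  -- `d = j` lies in the class of `0`, which is outside `[a, c]` unless `a = 0`
  rw [glue_leftEmb_self] at hbd
  rcases Nat.eq_zero_or_pos a with ha | ha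
  · exact (Fin.ext ha : a = ⟨0, a.pos⟩) ▸ L.symm hbd
  · exact hL.rel_of_notMem_Icc hac ⟨hab, hbc⟩ hbd fun h => ha.not_ge h.1

end Setoid

end Cut

namespace NCSetoid

variable {n : ℕ}

noncomputable def split (r : NCSetoid (n + 1)) :
    Σ j : Fin (n + 1), NCSetoid j × NCSetoid (n - j) :=
  ⟨r.1.zeroClassMax, ⟨_, r.2.comap (leftEmb_strictMono _)⟩,
    ⟨_, r.2.comap (rightEmb_strictMono _)⟩⟩

def glue (x : Σ j : Fin (n + 1), NCSetoid j × NCSetoid (n - j)) : NCSetoid (n + 1) :=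
  ⟨Setoid.glue x.1 x.2.1.1 x.2.2.1, Setoid.glue_isNoncrossing x.2.1.2 x.2.2.2⟩

lemma glue_split (r : NCSetoid (n + 1)) : glue (split r) = r :=
  Subtype.ext <| Setoid.glue_isSplitAt.ext r.2.isSplitAt_zeroClassMax
    Setoid.comap_leftEmb_glue Setoid.comap_rightEmb_glue

lemma glue_injective : Function.Injective (glue (n := n)) := by
  rintro ⟨j, L, R⟩ ⟨j', L', R'⟩ h
  obtain rfl : j = j' := by
    simpa only [glue, Setoid.glue_isSplitAt.zeroClassMax_eq] using
      congrArg (fun r : NCSetoid (n + 1) => r.1.zeroClassMax) h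
  have h' : Setoid.glue j L.1 R.1 = Setoid.glue j L'.1 R'.1 := congrArg Subtype.val h
  have hL : L = L' := Subtype.ext <| by
    rw [← Setoid.comap_leftEmb_glue (L := L.1) (R := R.1), h', Setoid.comap_leftEmb_glue]
  have hR : R = R' := Subtype.ext <| by
    rw [← Setoid.comap_rightEmb_glue (L := L.1) (R := R.1), h', Setoid.comap_rightEmb_glue]
  rw [hL, hR]

noncomputable def succEquiv (n : ℕ) :
    NCSetoid (n + 1) ≃ Σ j : Fin (n + 1), NCSetoid j × NCSetoid (n - j) where
  toFun := split
  invFun := glue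
  left_inv := glue_split
  right_inv x := glue_injective (glue_split (glue x))

lemma card_eq_catalan (n : ℕ) : Nat.card (NCSetoid n) = catalan n := by
  induction n using Nat.strong_induction_on with
  | _ n ih =>
    rcases n with _ | n
    · rw [card_zero, catalan_zero]
    · rw [Nat.card_congr (succEquiv n), Nat.card_sigma, catalan_succ]
      refine Finset.sum_congr rfl fun j _ => ?_
      rw [Nat.card_prod, ih j j.isLt, ih (n - j) (by omega)]

end NCSetoid

/-- The number of non-crossing partitions of `{1,…,n}` is the `n`-th Catalan number, and
the Kreweras complement (the greatest non-crossing partition compatible with a given one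
on the interleaved set) is an order-reversing bijection of `NC(n)`. -/
theorem ncpart_card_catalan_and_kreweras_antitone_bijection (n : ℕ) :
    Nat.card (NCPart n) = catalan n ∧
    (∀ π : NCPart n, IsGreatest {σ : NCPart n | KrewCompat π.1 σ.1} (kreweras π)) ∧
    Function.Bijective (kreweras (n := n)) ∧
    (∀ π σ : NCPart n, π ≤ σ → kreweras σ ≤ kreweras π) := by
  have hK : kreweras (n := n) = NCPart.krewerasComplement :=
    funext NCPart.kreweras_eq_krewerasComplement
  refine ⟨(Nat.card_congr (NCPart.equivNCSetoid n)).trans (NCSetoid.card_eq_catalan n),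
    fun π => ?_, ?_, fun π σ h => ?_⟩
  · rw [hK, NCPart.setOf_krewCompat_eq_Iic]
    exact isGreatest_Iic
  · rw [hK, ← Finite.injective_iff_bijective]
    exact fun π σ h => le_antisymm (NCPart.krewerasComplement_le_iff.1 h.ge)
      (NCPart.krewerasComplement_le_iff.1 h.le)
  · rw [hK]
    exact NCPart.krewerasComplement_le_iff.2 h
end

section
/- Let (𝒜, φ) be a non-commutative k-probability space (φ: 𝒜 → k, k a field, φ(1)=1). If unital subalgebras 𝒜₁, …, 𝒜ₙ ⊆ 𝒜 have vanishing mixed free cumulants (are combinatorially free), then they are classically free: φ(a₁···aₘ) = 0 whenever aⱼ ∈ 𝒜_{iⱼ}, consecutive indices differ (i₁ ≠ i₂, …, i_{m−1} ≠ iₘ), and φ(aⱼ) = 0 for all j. -/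
/-!
Expand `φ(a₁⋯aₘ)` by the moment–cumulant formula. Every non-crossing partition has a block of
consecutive positions. If that block is a singleton `{j}`, its cumulant is `κ₁(aⱼ) = φ(aⱼ) = 0`;
otherwise it contains two neighbouring positions, whose subalgebras differ, so its cumulant is
mixed and vanishes. Hence every term of the sum is zero.
-/

open Finset

/-- The sublist of `l` at a set of positions `V`, in increasing order. -/
def lres {A : Type*} (l : List A) (V : Finset (Fin l.length)) : List A :=
  (V.sort (· ≤ ·)).map l.get

namespace Finpartition

variable {m : ℕ} {π : Finpartition (univ : Finset (Fin m))}

lemma subset_Ioo_of_isNoncrossing (hπ : IsNoncrossing π) {V B : Finset (Fin m)}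
    (hV : V ∈ π.parts) (hB : B ∈ π.parts) (hBV : B ≠ V) {x y z : Fin m}
    (hx : x ∈ V) (hz : z ∈ V) (hxy : x < y) (hyz : y < z) (hy : y ∈ B) :
    (B : Set (Fin m)) ⊆ Set.Ioo x z := by
  intro e he
  constructor
  · rcases lt_trichotomy x e with h | h | h
    · exact h
    · exact absurd (π.eq_of_mem_parts hB hV he (h ▸ hx)) hBV
    · exact absurd ⟨e, x, y, z, B, V, h, hxy, hyz, hB, hV, hBV, he, hy, hx, hz⟩ hπ
  · rcases lt_trichotomy e z with h | h | h
    · exact h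
    · exact absurd (π.eq_of_mem_parts hB hV he (h ▸ hz)) hBV
    · exact absurd ⟨x, y, z, e, V, B, hxy, hyz, h, hV, hB, hBV.symm, hx, hz, hy, he⟩ hπ

lemma exists_ordConnected_mem_parts (hπ : IsNoncrossing π) (hm : 0 < m) :
    ∃ V ∈ π.parts, (V : Set (Fin m)).OrdConnected := by
  obtain ⟨W, hW, -⟩ := π.exists_mem (mem_univ (⟨0, hm⟩ : Fin m))
  -- A block of minimal width `max V + (m - min V)` is an interval: a block meeting a gap of `V`
  -- is nested inside that gap, hence narrower. The `sup`s avoid a nonemptiness side condition.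
  let width : Finset (Fin m) → ℕ := fun V => V.sup (fun a => (a : ℕ)) + V.sup (fun a => m - a)
  obtain ⟨V, hV, hmin⟩ := exists_min_image π.parts width ⟨W, hW⟩
  refine ⟨V, hV, Set.ordConnected_iff.2 fun x hx z hz _ y ⟨hxy, hyz⟩ => ?_⟩
  by_contra hy
  obtain ⟨B, hB, hyB⟩ := π.exists_mem (mem_univ y)
  have hBV : B ≠ V := fun h => hy (h ▸ hyB)
  have hBxz := subset_Ioo_of_isNoncrossing hπ hV hB hBV hx hz
    (hxy.lt_of_ne fun h => hy (h ▸ hx)) (hyz.lt_of_ne fun h => hy (h ▸ hz)) hyB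
  have hwB : width B < width V := by
    have hB₁ : B.sup (fun a => (a : ℕ)) ≤ z - 1 :=
      Finset.sup_le fun e he => by have : (e : ℕ) < z := (hBxz he).2; omega
    have hB₂ : B.sup (fun a => m - (a : ℕ)) ≤ m - (x + 1) :=
      Finset.sup_le fun e he => by have : (x : ℕ) < e := (hBxz he).1; omega
    have hV₁ : (z : ℕ) ≤ V.sup (fun a => (a : ℕ)) := Finset.le_sup hz
    have hV₂ : m - (x : ℕ) ≤ V.sup (fun a => m - (a : ℕ)) :=
      Finset.le_sup (f := fun a : Fin m => m - (a : ℕ)) hx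
    have : (x : ℕ) < z := (hBxz hyB).1.trans (hBxz hyB).2
    dsimp only [width]
    omega
  exact (hmin B hB).not_gt hwB

end Finpartition

lemma Finset.exists_mem_and_succ_mem_of_ordConnected {m : ℕ} {V : Finset (Fin m)}
    (hV : (V : Set (Fin m)).OrdConnected) (hc : 1 < #V) :
    ∃ (j : Fin m) (h : (j : ℕ) + 1 < m), j ∈ V ∧ ⟨j + 1, h⟩ ∈ V := by
  have hne : V.Nonempty := card_pos.1 (by omega)
  have hlt : (V.min' hne : ℕ) < V.max' hne := V.min'_lt_max'_of_card hc
  refine ⟨V.min' hne, by omega, V.min'_mem hne, ?_⟩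
  refine hV.out (V.min'_mem hne) (V.max'_mem hne) ⟨?_, ?_⟩ <;>
    simp only [Fin.le_def] <;> omega

lemma isNCFamily_fin_one (P : Finset (Finset (Fin 1))) : IsNCFamily P := by
  rintro ⟨a, b, -, -, -, -, hab, -⟩
  exact hab.ne (Subsingleton.elim a b)

noncomputable instance : Unique (NCPart 1) where
  default := ⟨.indiscrete (by simp [univ_unique]), isNCFamily_fin_one _⟩
  uniq π := Subtype.ext <| by
    -- the argument `P` of `IsAtom.uniqueFinpartition` is spurious
    have : Unique (Finpartition (univ : Finset (Fin 1))) :=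
      (Finset.isAtom_iff.2 ⟨0, univ_unique⟩).uniqueFinpartition (P := π.1)
    exact Subsingleton.elim _ _

section lres

variable {A : Type*}

lemma lres_singleton (l : List A) (j : Fin l.length) : lres l {j} = [l.get j] := by
  rw [lres, sort_singleton, List.map_singleton]

lemma get_lres (l : List A) (V : Finset (Fin l.length)) (p : Fin (lres l V).length) :
    (lres l V).get p = l.get ((V.sort (· ≤ ·)).get (p.cast (List.length_map _))) :=
  List.getElem_map ..

end lres

section Cumulants

variable {k A : Type*}

lemma cumulant_singleton [CommSemiring k] [Monoid A] {φ : A → k} {κ : List A → k}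
    (hmc : ∀ l : List A, φ l.prod = ∑ᶠ π : NCPart l.length, ∏ V ∈ π.1.parts, κ (lres l V))
    (a : A) : κ [a] = φ a := by
  have h := hmc [a]
  rw [List.prod_singleton, finsum_unique (α := NCPart 1)] at h
  have hd : (default : NCPart 1).1.parts = {univ} :=
    Finpartition.indiscrete_parts (by simp [univ_unique])
  rw [h, hd, prod_singleton, univ_unique, lres_singleton]
  rfl

lemma cumulant_lres_eq_zero [Zero k] {ι S : Type*} [SetLike S A] {𝒜 : ι → S} {κ : List A → k}
    (hmixed : ∀ (l : List A) (idx : Fin l.length → ι),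
      (∀ j : Fin l.length, l.get j ∈ 𝒜 (idx j)) →
      (∃ j j' : Fin l.length, idx j ≠ idx j') → κ l = 0)
    {l : List A} {idx : Fin l.length → ι} (hmem : ∀ j, l.get j ∈ 𝒜 (idx j))
    {V : Finset (Fin l.length)} {i i' : Fin l.length} (hi : i ∈ V) (hi' : i' ∈ V)
    (hne : idx i ≠ idx i') : κ (lres l V) = 0 := by
  set s := V.sort (· ≤ ·)
  have hlen : (lres l V).length = s.length := List.length_map _
  obtain ⟨p, hp⟩ := List.mem_iff_get.1 ((mem_sort (· ≤ ·)).2 hi)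
  obtain ⟨p', hp'⟩ := List.mem_iff_get.1 ((mem_sort (· ≤ ·)).2 hi')
  refine hmixed _ (fun q => idx (s.get (q.cast hlen))) (fun q => ?_)
    ⟨p.cast hlen.symm, p'.cast hlen.symm, ?_⟩
  · rw [get_lres]
    exact hmem _
  · simp only [Fin.cast_cast, Fin.cast_eq_self]
    rwa [hp, hp']

end Cumulants

theorem combinatorially_free_implies_classically_free_general
    {k : Type*} [Field k] {A : Type*} [Ring A] [Algebra k A]
    (φ : A →ₗ[k] k)
    {ι : Type*} (𝒜 : ι → Subalgebra k A)
    (κ : List A → k)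
    (hmc : ∀ l : List A,
      φ l.prod = ∑ᶠ π : NCPart l.length, ∏ V ∈ π.1.parts, κ (lres l V))
    (hmixed : ∀ (l : List A) (idx : Fin l.length → ι),
      (∀ j : Fin l.length, l.get j ∈ 𝒜 (idx j)) →
      (∃ j j' : Fin l.length, idx j ≠ idx j') → κ l = 0) :
    ∀ (l : List A) (idx : Fin l.length → ι), l ≠ [] →
      (∀ j : Fin l.length, l.get j ∈ 𝒜 (idx j)) →
      (∀ (j : Fin l.length) (h : (j : ℕ) + 1 < l.length), idx j ≠ idx ⟨(j : ℕ) + 1, h⟩) →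
      (∀ j : Fin l.length, φ (l.get j) = 0) →
      φ l.prod = 0 := by
  intro l idx hl hmem halt hcentered
  rw [hmc l]
  refine finsum_eq_zero_of_forall_eq_zero fun π => ?_
  obtain ⟨V, hV, hVint⟩ :=
    Finpartition.exists_ordConnected_mem_parts π.2 (List.length_pos_iff.2 hl)
  refine prod_eq_zero hV ?_
  rcases (one_le_card.2 (π.1.nonempty_of_mem_parts hV)).eq_or_lt with hc | hc
  · obtain ⟨j, rfl⟩ := card_eq_one.1 hc.symm
    rw [lres_singleton, cumulant_singleton hmc, hcentered]
  · obtain ⟨j, hj, hjV, hj'V⟩ := exists_mem_and_succ_mem_of_ordConnected hVint hc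
    exact cumulant_lres_eq_zero hmixed hmem hjV hj'V (halt j hj)

/-- Combinatorially free subalgebras are classically free.  Let `(𝒜, φ)` be a
non-commutative `k`-probability space (`φ` `k`-linear, `φ(1) = 1`, `k` a field), and let
`κ` be the free cumulant functionals, i.e. `φ(a₁⋯aₙ) = ∑_{π ∈ NC(n)} ∏_{V ∈ π} κ(a|_V)`.
If the subalgebras `𝒜_i` have vanishing mixed cumulants, then `φ(a₁⋯aₘ) = 0` whenever
`aⱼ ∈ 𝒜_{iⱼ}` with consecutive indices distinct and `φ(aⱼ) = 0` for all `j`. -/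
theorem combinatorially_free_implies_classically_free
    {k : Type*} [Field k] {A : Type*} [Ring A] [Algebra k A]
    (φ : A →ₗ[k] k) (hφ : φ 1 = 1)
    {ι : Type*} (𝒜 : ι → Subalgebra k A)
    (κ : List A → k)
    (hmc : ∀ l : List A,
      φ l.prod = ∑ᶠ π : NCPart l.length, ∏ V ∈ π.1.parts, κ (lres l V))
    (hmixed : ∀ (l : List A) (idx : Fin l.length → ι),
      (∀ j : Fin l.length, l.get j ∈ 𝒜 (idx j)) →
      (∃ j j' : Fin l.length, idx j ≠ idx j') → κ l = 0) :
    ∀ (l : List A) (idx : Fin l.length → ι), l ≠ [] →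
      (∀ j : Fin l.length, l.get j ∈ 𝒜 (idx j)) →
      (∀ (j : Fin l.length) (h : (j : ℕ) + 1 < l.length), idx j ≠ idx ⟨(j : ℕ) + 1, h⟩) →
      (∀ j : Fin l.length, φ (l.get j) = 0) →
      φ l.prod = 0 :=
  combinatorially_free_implies_classically_free_general φ 𝒜 κ hmc hmixed
end
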